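/- arXiv:0807.4229 — 4 statements merged into one kernel-verified Lean document; each statement's English description precedes it below -/
import Mathlib

section
/- Let X = ∏_{i=1}^n X_i be a product of n finite intervals of integers, each of cardinality at least 2, and let F = (f_1,…,f_n) be a map from X to itself. If I ⊆ {1,…,n} is such that every positive circuit of every local interaction graph 𝐆_F(x,v) (for (x,v) ∈ X') has at least one vertex in I, then the number of fixed points of F is at most ∏_{i∈I} |X_i|. -/
/-! Common definitions for discrete dynamical systems on products of
integer intervals, following Richard, "Positive circuits and maximal
number of fixed points in discrete dynamical systems". -/

/-- The state space `X = ∏ i, [a i, b i]` as a subset of `Fin n → ℤ`. -/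
def StateSpace {n : ℕ} (a b : Fin n → ℤ) : Set (Fin n → ℤ) :=
  {x | ∀ i, a i ≤ x i ∧ x i ≤ b i}

/-- `v` is a directional vector, i.e. `v ∈ {-1,1}^n`. -/
def IsDir {n : ℕ} (v : Fin n → ℤ) : Prop := ∀ i, v i = 1 ∨ v i = -1

/-- `(x, v) ∈ X'`: `x ∈ X`, `v ∈ {-1,1}^n` and `x + v ∈ X`. -/
def InX' {n : ℕ} (a b : Fin n → ℤ) (x v : Fin n → ℤ) : Prop :=
  x ∈ StateSpace a b ∧ IsDir v ∧ (x + v) ∈ StateSpace a b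

/-- Discrete Jacobian entry `f_ij(x,v) = (f_i(x + v_j e_j) - f_i(x)) / v_j`. -/
def jac {n : ℕ} (F : (Fin n → ℤ) → Fin n → ℤ) (x v : Fin n → ℤ) (i j : Fin n) : ℤ :=
  (F (Function.update x j (x j + v j)) i - F x i) / v j

/-- A signed edge `(j, s, i)`: initial vertex `j`, sign `s`, final vertex `i`. -/
abbrev SEdge (n : ℕ) := Fin n × ℤ × Fin n

/-- Edge set of the local interaction graph `𝐆_F(x,v)`: a positive
(resp. negative) edge from `j` to `i` iff `f_ij(x,v) > 0` (resp. `< 0`). -/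
def localGraph {n : ℕ} (F : (Fin n → ℤ) → Fin n → ℤ) (x v : Fin n → ℤ) :
    Set (SEdge n) :=
  {e | (e.2.1 = 1 ∧ 0 < jac F x v e.2.2 e.1) ∨ (e.2.1 = -1 ∧ jac F x v e.2.2 e.1 < 0)}

/-- `p` and `q` are on both sides of `t`. -/
def BothSides (p q t : ℚ) : Prop := (p < t ∧ t < q) ∨ (q < t ∧ t < p)

/-- Edge set of the local interaction graph with thresholds `G_F(x,v)`:
an edge `(j,s,i)` of `𝐆_F(x,v)` such that moreover `f_i(x)` and
`f_i(x + v_j e_j)` are on both sides of the threshold `x_i + v_i / 2`. -/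
def localGraphT {n : ℕ} (F : (Fin n → ℤ) → Fin n → ℤ) (x v : Fin n → ℤ) :
    Set (SEdge n) :=
  {e | e ∈ localGraph F x v ∧
    BothSides (F x e.2.2) (F (Function.update x e.1 (x e.1 + v e.1)) e.2.2)
      ((x e.2.2 : ℚ) + (v e.2.2 : ℚ) / 2)}

/-- `c` is an (elementary) circuit of the signed graph with edge set `E`:
a nonempty sequence of consecutive edges, closing up, whose initial
vertices are mutually distinct. -/
def IsCircuit {n : ℕ} (E : Set (SEdge n)) (c : List (SEdge n)) : Prop :=
  c ≠ [] ∧ (∀ e ∈ c, e ∈ E) ∧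
  (∀ (k : ℕ) (h : k + 1 < c.length),
    (c.get ⟨k, Nat.lt_of_succ_lt h⟩).2.2 = (c.get ⟨k + 1, h⟩).1) ∧
  (c.getLast?).map (fun e => e.2.2) = (c.head?).map (fun e => e.1) ∧
  (c.map (fun e => e.1)).Nodup

/-- A positive circuit: a circuit whose product of signs is positive. -/
def IsPosCircuit {n : ℕ} (E : Set (SEdge n)) (c : List (SEdge n)) : Prop :=
  IsCircuit E c ∧ 0 < (c.map (fun e => e.2.1)).prod

/-- The graph `E` has a positive circuit. -/
def HasPosCircuit {n : ℕ} (E : Set (SEdge n)) : Prop := ∃ c, IsPosCircuit E c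

/-- Vertex `i` belongs to some positive circuit of `E`. -/
def MemPosCircuit {n : ℕ} (E : Set (SEdge n)) (i : Fin n) : Prop :=
  ∃ c, IsPosCircuit E c ∧ i ∈ c.map (fun e => e.1)

/-- `I` is a positive feedback vertex set of `E`: every positive circuit
of `E` has at least one vertex in `I`. -/
def IsPFVS {n : ℕ} (E : Set (SEdge n)) (I : Finset (Fin n)) : Prop :=
  ∀ c, IsPosCircuit E c → ∃ i ∈ I, i ∈ c.map (fun e => e.1)

/-- `T_i(G_F)`: the set of real numbers `t` such that `t = x_i + v_i/2` for
some `(x,v) ∈ X'` such that `i` belongs to a positive circuit of `G_F(x,v)`. -/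
def Tset {n : ℕ} (a b : Fin n → ℤ) (F : (Fin n → ℤ) → Fin n → ℤ) (i : Fin n) : Set ℝ :=
  {t | ∃ x v, InX' a b x v ∧ t = (x i : ℝ) + (v i : ℝ) / 2 ∧
    MemPosCircuit (localGraphT F x v) i}

/-- Edge set of the global interaction graph `𝐆(F)` (without thresholds). -/
def globalGraph {n : ℕ} (a b : Fin n → ℤ) (F : (Fin n → ℤ) → Fin n → ℤ) :
    Set (SEdge n) :=
  ⋃ (x : Fin n → ℤ) (v : Fin n → ℤ) (_ : InX' a b x v), localGraph F x v

/-- Edge set of the global interaction graph `G(F)` (with thresholds). -/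
def globalGraphT {n : ℕ} (a b : Fin n → ℤ) (F : (Fin n → ℤ) → Fin n → ℤ) :
    Set (SEdge n) :=
  ⋃ (x : Fin n → ℤ) (v : Fin n → ℤ) (_ : InX' a b x v), localGraphT F x v

/-- Edge relation of the asynchronous state transition graph `Γ(F)`. -/
def Async {n : ℕ} (F : (Fin n → ℤ) → Fin n → ℤ) (x y : Fin n → ℤ) : Prop :=
  ∃ i, F x i ≠ x i ∧ y = Function.update x i (x i + (F x i - x i).sign)

/-- A trap domain of `Γ(F)`: a nonempty subset of `X` closed under the
edges of `Γ(F)`. -/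
def IsTrapDomain {n : ℕ} (a b : Fin n → ℤ) (F : (Fin n → ℤ) → Fin n → ℤ)
    (A : Set (Fin n → ℤ)) : Prop :=
  A.Nonempty ∧ A ⊆ StateSpace a b ∧ ∀ x ∈ A, ∀ y, Async F x y → y ∈ A

/-- An attractor of `Γ(F)`: a trap domain minimal for inclusion. -/
def IsAttractor {n : ℕ} (a b : Fin n → ℤ) (F : (Fin n → ℤ) → Fin n → ℤ)
    (A : Set (Fin n → ℤ)) : Prop :=
  IsTrapDomain a b F A ∧ ∀ B, IsTrapDomain a b F B → B ⊆ A → B = A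

/-! Two distinct fixed points `p`, `q` satisfy `PointsAwayFrom F p q` and `PointsAwayFrom F q p`:
no coordinate of `F p` moves from `p` towards `q`, and symmetrically. Let `v` point from `p`
towards `q`. If for every coordinate `k` where `p` and `q` differ, stepping from `p` by `v k`
along `k` makes some such coordinate `i` of `F` move towards `q`, then the entry
`f_ik(p, v)` has sign `v i * v k`; following these edges around a cycle gives a circuit whose sign
telescopes to `+1` and which only visits coordinates where `p` and `q` differ. Otherwise the step
`p'` along some such `k` still satisfies `PointsAwayFrom F p' q`, and we recurse on the smaller
box between `p'` and `q`. So two fixed points agreeing on `I` are equal, and the fixed points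
inject into the restrictions to `I`. -/

open Function

theorem Function.exists_iterate_mem_periodicPts {α : Type*} [Finite α] (f : α → α) (x : α) :
    ∃ m, f^[m] x ∈ periodicPts f := by
  obtain ⟨i, j, hij, heq⟩ := Finite.exists_ne_map_eq_of_infinite (f^[·] x)
  wlog hlt : i < j generalizing i j
  · exact this j i hij.symm heq.symm (by omega)
  refine ⟨i, mk_mem_periodicPts (n := j - i) (by omega) ?_⟩
  rw [IsPeriodicPt, IsFixedPt, ← iterate_add_apply, Nat.sub_add_cancel hlt.le]
  exact heq.symm

section SignedGraph

variable {n : ℕ} {E : Set (SEdge n)} {s : Fin n → ℤ}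

theorem prod_range_sign_mul_sign (hs : IsDir s) (κ : ℕ → Fin n) (m : ℕ) :
    ((List.range m).map fun t => s (κ (t + 1)) * s (κ t)).prod = s (κ m) * s (κ 0) := by
  have hsq : ∀ j, s j * s j = 1 := fun j => by rcases hs j with h | h <;> simp [h]
  induction m with
  | zero => simp [hsq]
  | succ m ih =>
    rw [List.range_succ, List.map_append, List.prod_append, ih]
    simp only [List.map_cons, List.map_nil, List.prod_cons, List.prod_nil, mul_one]
    linear_combination (s (κ (m + 1)) * s (κ 0)) * hsq (κ m)

theorem isPosCircuit_range_map (hs : IsDir s) {κ : ℕ → Fin n} {m : ℕ} (hm : 0 < m)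
    (hκm : κ m = κ 0) (hκ : Set.InjOn κ (Set.Iio m))
    (hE : ∀ t, (κ t, s (κ (t + 1)) * s (κ t), κ (t + 1)) ∈ E) :
    IsPosCircuit E ((List.range m).map fun t => (κ t, s (κ (t + 1)) * s (κ t), κ (t + 1))) := by
  refine ⟨⟨by simp [hm.ne'], by simp [hE], fun k hk => by simp, ?_, ?_⟩, ?_⟩
  · rw [List.getLast?_eq_getElem?, List.head?_eq_getElem?]
    simp [hm, Nat.sub_add_cancel hm, hκm]
  · rw [List.map_map]
    exact List.nodup_range.map_on fun t ht t' ht' => hκ (by simpa using ht) (by simpa using ht')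
  · rw [List.map_map, comp_def, prod_range_sign_mul_sign hs, hκm]
    rcases hs (κ 0) with h | h <;> simp [h]

theorem exists_isPosCircuit_of_forall_exists_edge (hs : IsDir s) {S : Set (Fin n)}
    (hS : S.Nonempty) (hE : ∀ k ∈ S, ∃ i ∈ S, (k, s i * s k, i) ∈ E) :
    ∃ c, IsPosCircuit E c ∧ ∀ e ∈ c, e.1 ∈ S := by
  choose f hfS hf using hE
  let g : S → S := fun k => ⟨f k k.2, hfS k k.2⟩
  obtain ⟨k₀, hk₀⟩ := hS
  obtain ⟨m₀, hper⟩ := exists_iterate_mem_periodicPts g ⟨k₀, hk₀⟩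
  set y := g^[m₀] ⟨k₀, hk₀⟩
  let κ : ℕ → Fin n := fun t => g^[t] y
  have hedge : ∀ t, (κ t, s (κ (t + 1)) * s (κ t), κ (t + 1)) ∈ E := fun t => by
    simp only [κ, iterate_succ_apply']
    exact hf _ (g^[t] y).2
  refine ⟨_, isPosCircuit_range_map hs (minimalPeriod_pos_of_mem_periodicPts hper)
    (congrArg Subtype.val (isPeriodicPt_minimalPeriod g y))
    (Subtype.val_injective.comp_injOn iterate_injOn_Iio_minimalPeriod) hedge, ?_⟩
  simp only [List.mem_map, List.mem_range]
  rintro _ ⟨t, -, rfl⟩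
  exact (g^[t] y).2

end SignedGraph

theorem mem_localGraph_of_pos {n : ℕ} {F : (Fin n → ℤ) → Fin n → ℤ} {x v : Fin n → ℤ}
    (hv : IsDir v) {k i : Fin n} {u : ℤ} (hu : u = 1 ∨ u = -1)
    (h : 0 < u * (F (update x k (x k + v k)) i - F x i)) : (k, u * v k, i) ∈ localGraph F x v := by
  simp only [localGraph, jac, Set.mem_ofPred_eq]
  rcases hu with rfl | rfl <;> rcases hv k with hk | hk <;> rw [hk] at h ⊢ <;>
    simp only [Int.ediv_one, Int.ediv_neg] <;> omega

section Dynamics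

variable {n : ℕ} {a b : Fin n → ℤ} {F : (Fin n → ℤ) → Fin n → ℤ} {p q v : Fin n → ℤ}
  {c : Fin n}

def PointsAwayFrom (F : (Fin n → ℤ) → Fin n → ℤ) (p q : Fin n → ℤ) : Prop :=
  ∀ j, (p j < q j → F p j ≤ p j) ∧ (q j < p j → p j ≤ F p j)

def DirToward (p q v : Fin n → ℤ) : Prop :=
  ∀ k, (p k < q k → v k = 1) ∧ (q k < p k → v k = -1)

theorem pointsAwayFrom_of_fixed (hp : F p = p) (q : Fin n → ℤ) : PointsAwayFrom F p q :=
  fun j => by rw [hp]; omega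

theorem exists_inX'_toward (hab : ∀ i, a i + 1 ≤ b i) (hp : p ∈ StateSpace a b)
    (hq : q ∈ StateSpace a b) :
    ∃ v, InX' a b p v ∧ DirToward p q v := by
  refine ⟨fun k => if p k < q k ∨ (p k = q k ∧ p k < b k) then 1 else -1,
    ⟨hp, fun k => by dsimp only; split_ifs <;> simp, fun k => ?_⟩, fun k => ?_⟩
  · have := hp k; have := hq k; have := hab k
    simp only [Pi.add_apply]; split_ifs <;> omega
  · dsimp only; constructor <;> intro <;> split_ifs <;> omega

theorem mem_stateSpace_of_mem_uIcc {r : Fin n → ℤ} (hp : p ∈ StateSpace a b)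
    (hq : q ∈ StateSpace a b) (hr : ∀ j, r j ∈ Set.uIcc (p j) (q j)) : r ∈ StateSpace a b :=
  fun j => by have := hp j; have := hq j; have := Set.mem_uIcc.mp (hr j); omega

theorem PointsAwayFrom.of_mem_uIcc {r : Fin n → ℤ} (hq : PointsAwayFrom F q p)
    (hr : ∀ j, r j ∈ Set.uIcc (p j) (q j)) : PointsAwayFrom F q r :=
  fun j => by have := hq j; have := Set.mem_uIcc.mp (hr j); omega

theorem update_add_mem_uIcc (hvq : DirToward p q v) (hc : p c ≠ q c) (j : Fin n) :
    update p c (p c + v c) j ∈ Set.uIcc (p j) (q j) := by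
  rw [Set.mem_uIcc]
  rcases eq_or_ne j c with rfl | hj
  · have := hvq j; rw [update_self]; omega
  · rw [update_of_ne hj]; omega

theorem sum_natAbs_sub_update_lt (hvq : DirToward p q v) (hc : p c ≠ q c) :
    ∑ j, (q j - update p c (p c + v c) j).natAbs < ∑ j, (q j - p j).natAbs := by
  refine Finset.sum_lt_sum (fun j _ => ?_) ⟨c, Finset.mem_univ c, ?_⟩
  · have := Set.mem_uIcc.mp (update_add_mem_uIcc hvq hc j); omega
  · have := hvq c; rw [update_self]; omega

theorem pointsAwayFrom_update (hvq : DirToward p q v) (hc : p c ≠ q c)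
    (hstay : ∀ i, p i ≠ q i → v i * (F (update p c (p c + v c)) i - p i) ≤ 0) :
    PointsAwayFrom F (update p c (p c + v c)) q := fun j => by
  have := Set.mem_uIcc.mp (update_add_mem_uIcc hvq hc j)
  obtain ⟨hlt, hgt⟩ := hvq j
  by_cases hj : p j = q j
  · omega
  · have := hstay j hj
    constructor <;> intro h
    · rw [hlt (by omega)] at this; omega
    · rw [hgt (by omega)] at this; omega

theorem update_add_ne (hvq : DirToward p q v) (hc : p c ≠ q c)
    (hstay : ∀ i, p i ≠ q i → v i * (F (update p c (p c + v c)) i - p i) ≤ 0)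
    (hFq : PointsAwayFrom F q p) : update p c (p c + v c) ≠ q := by
  intro h
  have hc' := hstay c hc
  rw [h] at hc'
  have := hFq c
  rcases lt_or_gt_of_ne hc with hlt | hgt
  · rw [(hvq c).1 hlt] at hc'; omega
  · rw [(hvq c).2 hgt] at hc'; omega

theorem exists_isPosCircuit_of_pointsAwayFrom (hab : ∀ i, a i + 1 ≤ b i) {p q : Fin n → ℤ}
    (hp : p ∈ StateSpace a b) (hq : q ∈ StateSpace a b) (hpq : p ≠ q)
    (hFp : PointsAwayFrom F p q) (hFq : PointsAwayFrom F q p) :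
    ∃ z v c, InX' a b z v ∧ IsPosCircuit (localGraph F z v) c ∧ ∀ e ∈ c, p e.1 ≠ q e.1 := by
  obtain ⟨v, hv, hvq⟩ := exists_inX'_toward hab hp hq
  by_cases hcyc : ∀ k, p k ≠ q k →
      ∃ i, p i ≠ q i ∧ 0 < v i * (F (update p k (p k + v k)) i - p i)
  · obtain ⟨k₀, hk₀⟩ := Function.ne_iff.mp hpq
    obtain ⟨γ, hγ, hγS⟩ := exists_isPosCircuit_of_forall_exists_edge (E := localGraph F p v)
      hv.2.1 (S := {k | p k ≠ q k}) ⟨k₀, hk₀⟩ fun k hk => by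
        obtain ⟨i, hi, hpos⟩ := hcyc k hk
        refine ⟨i, hi, mem_localGraph_of_pos hv.2.1 (hv.2.1 i) ?_⟩
        have := hFp i
        rcases lt_or_gt_of_ne hi with hlt | hgt
        · rw [(hvq i).1 hlt] at hpos ⊢; omega
        · rw [(hvq i).2 hgt] at hpos ⊢; omega
    exact ⟨p, v, γ, hv, hγ, hγS⟩
  · push Not at hcyc
    obtain ⟨c, hc, hstay⟩ := hcyc
    have hbetween := update_add_mem_uIcc hvq hc
    obtain ⟨z, w, γ, hzw, hγ, hγS⟩ := exists_isPosCircuit_of_pointsAwayFrom hab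
      (mem_stateSpace_of_mem_uIcc hp hq hbetween) hq (update_add_ne hvq hc hstay hFq)
      (pointsAwayFrom_update hvq hc hstay) (hFq.of_mem_uIcc hbetween)
    refine ⟨z, w, γ, hzw, hγ, fun e he hpe => hγS e he ?_⟩
    have := Set.mem_uIcc.mp (hbetween e.1)
    omega
termination_by ∑ j, (q j - p j).natAbs
decreasing_by exact sum_natAbs_sub_update_lt hvq hc

end Dynamics

theorem ncard_le_prod_of_eqOn_imp_eq {n : ℕ} {a b : Fin n → ℤ} {S : Set (Fin n → ℤ)}
    (hS : S ⊆ StateSpace a b) {I : Finset (Fin n)}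
    (hI : ∀ x ∈ S, ∀ y ∈ S, Set.EqOn x y I → x = y) :
    S.ncard ≤ ∏ i ∈ I, (b i - a i + 1).toNat := by
  classical
  calc S.ncard ≤ (Fintype.piFinset fun i : I => Finset.Icc (a i) (b i)).card := by
        rw [← Set.ncard_coe_finset]
        refine Set.ncard_le_ncard_of_injOn (fun x (i : I) => x i) (fun x hx => ?_)
          (fun x hx y hy hxy => hI x hx y hy fun i hi => congrFun hxy ⟨i, hi⟩)
        simpa only [Finset.mem_coe, Fintype.mem_piFinset, Finset.mem_Icc] using fun i : I => hS hx i
    _ = ∏ i ∈ I, (b i - a i + 1).toNat := by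
        rw [Fintype.card_piFinset, Finset.prod_coe_sort I fun i => (Finset.Icc (a i) (b i)).card]
        simp only [Int.card_Icc, add_sub_right_comm]

theorem stmt0_general {n : ℕ} (a b : Fin n → ℤ) (hab : ∀ i, a i + 1 ≤ b i)
    (F : (Fin n → ℤ) → Fin n → ℤ)
    (I : Finset (Fin n))
    (hI : ∀ x v, InX' a b x v → IsPFVS (localGraph F x v) I) :
    {x ∈ StateSpace a b | F x = x}.ncard ≤ ∏ i ∈ I, (b i - a i + 1).toNat := by
  refine ncard_le_prod_of_eqOn_imp_eq (fun x hx => hx.1) fun x hx y hy hxy => ?_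
  by_contra hne
  obtain ⟨z, v, γ, hzv, hγ, hγ_ne⟩ := exists_isPosCircuit_of_pointsAwayFrom hab hx.1 hy.1 hne
    (pointsAwayFrom_of_fixed hx.2 y) (pointsAwayFrom_of_fixed hy.2 x)
  obtain ⟨i, hiI, hiγ⟩ := hI z v hzv γ hγ
  obtain ⟨e, he, rfl⟩ := List.mem_map.mp hiγ
  exact hγ_ne e he (hxy hiI)

/-- If every positive circuit of every local interaction graph `𝐆_F(x,v)`
has a vertex in `I`, then `F` has at most `∏_{i ∈ I} |X_i|` fixed points. -/
theorem stmt0 {n : ℕ} (a b : Fin n → ℤ) (hab : ∀ i, a i + 1 ≤ b i)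
    (F : (Fin n → ℤ) → Fin n → ℤ)
    (hF : ∀ x ∈ StateSpace a b, F x ∈ StateSpace a b)
    (I : Finset (Fin n))
    (hI : ∀ x v, InX' a b x v → IsPFVS (localGraph F x v) I) :
    {x ∈ StateSpace a b | F x = x}.ncard ≤ ∏ i ∈ I, (b i - a i + 1).toNat :=
  stmt0_general a b hab F I hI
end

section
/- Let X = ∏_{i=1}^n X_i be a product of n finite intervals of integers, each of cardinality at least 2, and let F be a map from X to itself. If for every (x,v) ∈ X' the local interaction graph with thresholds G_F(x,v) has no positive circuit, then the asynchronous state transition graph Γ(F) has exactly one attractor. -/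
/-!
A minimal trap domain exists because `X` is finite. If two attractors `A` and `B` were disjoint,
take `z ∈ A` and `y ∈ B` at minimal ℓ¹-distance: then no transition of `Γ(F)` leads from `z`
toward `y`, nor from `y` toward `z`. Look at the unit steps from `z` toward `y`. If one of them
leaves `F` pointing away from `y` in every coordinate where `z` and `y` differ, it yields a closer
pair of the same kind. Otherwise every such step `j` makes `F_i` cross the threshold toward `y` in
some differing coordinate `i`; with `v` pointing from `z` to `y`, these edges of `G_F(z, v)` carry
the sign `v_i v_j`, so following them until a vertex repeats closes a positive circuit.
-/

open Function

section Circuits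

variable {n : ℕ} (σ : Fin n → Fin n) (w : Fin n → ℤ) (c : Fin n)

noncomputable def orbitCircuit : List (SEdge n) :=
  (List.range (minimalPeriod σ c)).map
    fun t => (σ^[t] c, w (σ^[t + 1] c) * w (σ^[t] c), σ^[t + 1] c)

variable {σ c}

theorem isCircuit_orbitCircuit {E : Set (SEdge n)} (hc : c ∈ periodicPts σ)
    (hE : ∀ t, (σ^[t] c, w (σ^[t + 1] c) * w (σ^[t] c), σ^[t + 1] c) ∈ E) :
    IsCircuit E (orbitCircuit σ w c) := by
  have hp := minimalPeriod_pos_of_mem_periodicPts hc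
  obtain ⟨q, hq⟩ : ∃ q, minimalPeriod σ c = q + 1 := ⟨_, (Nat.succ_pred_eq_of_pos hp).symm⟩
  refine ⟨by simp [orbitCircuit]; omega, ?_, fun k hk => by simp [orbitCircuit], ?_, ?_⟩
  · simp only [orbitCircuit, List.mem_map]
    rintro _ ⟨t, -, rfl⟩
    exact hE t
  · have hclose : σ^[q + 1] c = c := hq ▸ iterate_minimalPeriod
    have hlast : (List.range (q + 1)).getLast? = some q := by simp [List.range_succ]
    have hhead : (List.range (q + 1)).head? = some 0 := by simp [List.range_succ_eq_map]
    rw [orbitCircuit, hq, List.getLast?_map, List.head?_map, hlast, hhead]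
    simpa using hclose
  · rw [orbitCircuit, List.map_map]
    exact List.nodup_range.map_on fun s hs t ht hst =>
      iterate_injOn_Iio_minimalPeriod (List.mem_range.mp hs) (List.mem_range.mp ht) hst

/-- The signs `w i * w j` telescope around the orbit, so their product is a square. -/
theorem prod_signs_orbitCircuit_pos (hw : ∀ i, w i ≠ 0) :
    0 < ((orbitCircuit σ w c).map fun e => e.2.1).prod := by
  set P := ((List.range (minimalPeriod σ c)).map fun t => w (σ^[t] c)).prod
  have hshift : ((List.range (minimalPeriod σ c)).map fun t => w (σ^[t + 1] c)).prod = P := by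
    have h := List.prod_range_succ (fun t => w (σ^[t] c)) (minimalPeriod σ c)
    rw [List.prod_range_succ', iterate_minimalPeriod, iterate_zero_apply, mul_comm] at h
    exact mul_right_cancel₀ (hw c) h
  have hP : P ≠ 0 := List.prod_ne_zero (by simp [hw])
  rw [orbitCircuit, List.map_map]
  simp only [Function.comp_def, List.prod_map_mul, hshift]
  exact mul_self_pos.mpr hP

end Circuits

theorem Set.MapsTo.exists_mem_periodicPts {α : Type*} [Finite α] {f : α → α} {S : Set α}
    (hf : MapsTo f S S) (hS : S.Nonempty) : ∃ x ∈ S, x ∈ periodicPts f := by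
  obtain ⟨x₀, hx₀⟩ := hS
  obtain ⟨m, k, hmk, heq⟩ : ∃ m k, m < k ∧ f^[m] x₀ = f^[k] x₀ := by
    obtain ⟨m, k, hne, heq⟩ := Finite.exists_ne_map_eq_of_infinite fun t => f^[t] x₀
    rcases hne.lt_or_gt with h | h
    exacts [⟨m, k, h, heq⟩, ⟨k, m, h, heq.symm⟩]
  refine ⟨f^[m] x₀, hf.iterate m hx₀, mk_mem_periodicPts (Nat.sub_pos_of_lt hmk) ?_⟩
  rw [IsPeriodicPt, IsFixedPt, ← iterate_add_apply, Nat.sub_add_cancel hmk.le, heq]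

theorem hasPosCircuit_of_forall_exists_edge {n : ℕ} {E : Set (SEdge n)} {w : Fin n → ℤ}
    (hw : ∀ i, w i ≠ 0) {S : Set (Fin n)} (hS : S.Nonempty)
    (hE : ∀ j ∈ S, ∃ i ∈ S, (j, w i * w j, i) ∈ E) : HasPosCircuit E := by
  have : Nonempty (Fin n) := hS.to_subtype.map Subtype.val
  choose! σ hσS hσE using hE
  obtain ⟨c, hcS, hc⟩ := Set.MapsTo.exists_mem_periodicPts hσS hS
  have hedge : ∀ t, (σ^[t] c, w (σ^[t + 1] c) * w (σ^[t] c), σ^[t + 1] c) ∈ E := fun t => by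
    rw [iterate_succ_apply']
    exact hσE _ (Set.MapsTo.iterate hσS t hcS)
  exact ⟨_, isCircuit_orbitCircuit w hc hedge, prod_signs_orbitCircuit_pos w hw⟩

theorem Int.sign_sub_cases (u v : ℤ) :
    u < v ∧ (v - u).sign = 1 ∨ u = v ∧ (v - u).sign = 0 ∨ v < u ∧ (v - u).sign = -1 := by
  rcases lt_trichotomy u v with h | rfl | h
  · exact Or.inl ⟨h, Int.sign_eq_one_of_pos (by omega)⟩
  · simp
  · exact Or.inr (Or.inr ⟨h, Int.sign_eq_neg_one_of_neg (by omega)⟩)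

section AsyncDynamics

variable {n : ℕ} {a b : Fin n → ℤ} {F : (Fin n → ℤ) → Fin n → ℤ} {y z : Fin n → ℤ}

def stepToward (z y : Fin n → ℤ) (j : Fin n) : Fin n → ℤ :=
  update z j (z j + (y j - z j).sign)

def l1Dist (z y : Fin n → ℤ) : ℕ := ∑ i, (y i - z i).natAbs

theorem l1Dist_comm (z y : Fin n → ℤ) : l1Dist z y = l1Dist y z :=
  Finset.sum_congr rfl fun i _ => by rw [← Int.natAbs_neg, neg_sub]

theorem l1Dist_stepToward {j : Fin n} (hj : z j ≠ y j) :
    l1Dist (stepToward z y j) y + 1 = l1Dist z y := by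
  unfold l1Dist
  rw [← Finset.add_sum_erase _ _ (Finset.mem_univ j),
    ← Finset.add_sum_erase _ _ (Finset.mem_univ j),
    Finset.sum_congr rfl fun i hi => by rw [stepToward, update_of_ne (Finset.ne_of_mem_erase hi)]]
  rcases Int.sign_sub_cases (z j) (y j) with ⟨h, hs⟩ | ⟨h, hs⟩ | ⟨h, hs⟩ <;>
    simp only [stepToward, update_self, hs] <;> omega

theorem stepToward_mem (hz : z ∈ StateSpace a b) (hy : y ∈ StateSpace a b) (j : Fin n) :
    stepToward z y j ∈ StateSpace a b := by
  intro i
  rcases eq_or_ne i j with rfl | hij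
  · have := hz i; have := hy i
    rcases Int.sign_sub_cases (z i) (y i) with ⟨h, hs⟩ | ⟨h, hs⟩ | ⟨h, hs⟩ <;>
      simp only [stepToward, update_self, hs] <;> omega
  · simpa only [stepToward, update_of_ne hij] using hz i

theorem ne_of_stepToward_ne {i j : Fin n} (hi : stepToward z y j i ≠ y i) : z i ≠ y i := by
  refine fun h => hi ?_
  rcases eq_or_ne i j with rfl | hij
  · simp [stepToward, h]
  · rw [stepToward, update_of_ne hij, h]

theorem sign_sub_stepToward {i j : Fin n} (hi : stepToward z y j i ≠ y i) :
    (y i - stepToward z y j i).sign = (y i - z i).sign := by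
  rcases eq_or_ne i j with rfl | hij
  · simp only [stepToward, update_self] at hi ⊢
    rcases Int.sign_sub_cases (z i) (y i) with ⟨h, hs⟩ | ⟨h, hs⟩ | ⟨h, hs⟩ <;> rw [hs] at hi ⊢
    · exact Int.sign_eq_one_of_pos (by omega)
    · omega
    · exact Int.sign_eq_neg_one_of_neg (by omega)
  · rw [stepToward, update_of_ne hij]

/-- No transition of `Γ(F)` out of `z` decreases the distance to `y`. -/
def NoStepToward (F : (Fin n → ℤ) → Fin n → ℤ) (z y : Fin n → ℤ) : Prop :=
  ∀ i, z i ≠ y i → (y i - z i).sign * (F z i - z i) ≤ 0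

theorem async_stepToward {i : Fin n} (hi : 0 < (y i - z i).sign * (F z i - z i)) :
    Async F z (stepToward z y i) := by
  have hsign : (F z i - z i).sign = (y i - z i).sign := by
    rcases Int.sign_sub_cases (z i) (y i) with ⟨-, hs⟩ | ⟨-, hs⟩ | ⟨-, hs⟩ <;>
      rcases Int.sign_sub_cases (z i) (F z i) with ⟨h, hs'⟩ | ⟨h, hs'⟩ | ⟨h, hs'⟩ <;>
      rw [hs] at hi ⊢ <;> rw [hs'] <;> omega
  refine ⟨i, fun h => ?_, by rw [stepToward, hsign]⟩
  rw [h, sub_self, mul_zero] at hi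
  exact hi.false

theorem noStepToward_of_forall_le {A : Set (Fin n → ℤ)}
    (hA : ∀ x ∈ A, ∀ x', Async F x x' → x' ∈ A) (hz : z ∈ A)
    (hmin : ∀ z' ∈ A, l1Dist z y ≤ l1Dist z' y) : NoStepToward F z y := by
  intro i hi
  by_contra! hpos
  have := hmin _ (hA z hz _ (async_stepToward hpos))
  have := l1Dist_stepToward hi
  omega

theorem noStepToward_stepToward {j : Fin n} (hj : z j ≠ y j)
    (hfar : ∀ i, z i ≠ y i → (y i - z i).sign * (F (stepToward z y j) i - z i) ≤ 0) :
    NoStepToward F (stepToward z y j) y := by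
  intro i hi
  rw [sign_sub_stepToward hi]
  rcases eq_or_ne i j with rfl | hij
  · have := hfar i hj
    simp only [stepToward, update_self] at this ⊢
    rcases Int.sign_sub_cases (z i) (y i) with ⟨-, hs⟩ | ⟨-, hs⟩ | ⟨-, hs⟩ <;> rw [hs] at this ⊢ <;>
      omega
  · have hzi : stepToward z y j i = z i := update_of_ne hij _ _
    rw [hzi] at hi ⊢
    exact hfar i hi

theorem NoStepToward.stepToward_right (h : NoStepToward F y z) (j : Fin n) :
    NoStepToward F y (stepToward z y j) := by
  intro i hi
  have hz : stepToward z y j i ≠ y i := Ne.symm hi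
  have := h i (ne_of_stepToward_ne hz).symm
  rwa [← neg_sub, Int.sign_neg, sign_sub_stepToward hz, ← Int.sign_neg, neg_sub]

theorem bothSides_add_half {p q u s : ℤ} (hs : s = 1 ∨ s = -1) (hp : s * (p - u) ≤ 0)
    (hq : 1 ≤ s * (q - u)) : BothSides p q (u + s / 2) := by
  rcases hs with rfl | rfl
  · have hp' : (p : ℚ) ≤ u := by exact_mod_cast (by omega : p ≤ u)
    have hq' : (u : ℚ) + 1 ≤ q := by exact_mod_cast (by omega : u + 1 ≤ q)
    left; constructor <;> push_cast <;> linarith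
  · have hp' : (u : ℚ) ≤ p := by exact_mod_cast (by omega : u ≤ p)
    have hq' : (q : ℚ) ≤ u - 1 := by exact_mod_cast (by omega : q ≤ u - 1)
    right; constructor <;> push_cast <;> linarith

theorem mem_localGraphT {w : Fin n → ℤ} {i j : Fin n} (hwi : w i = 1 ∨ w i = -1)
    (hwj : w j = 1 ∨ w j = -1) (h₀ : w i * (F z i - z i) ≤ 0)
    (h₁ : 1 ≤ w i * (F (update z j (z j + w j)) i - z i)) :
    (j, w i * w j, i) ∈ localGraphT F z w := by
  refine ⟨?_, bothSides_add_half hwi h₀ h₁⟩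
  simp only [localGraph, jac, Set.mem_ofPred_eq]
  rcases hwi with hi | hi <;> rcases hwj with hj | hj <;> simp only [hi, hj] at h₀ h₁ ⊢ <;> omega

theorem exists_inX'_sign_sub (hab : ∀ i, a i + 1 ≤ b i) (hz : z ∈ StateSpace a b)
    (hy : y ∈ StateSpace a b) :
    ∃ w, InX' a b z w ∧ ∀ i, z i ≠ y i → w i = (y i - z i).sign := by
  refine ⟨fun i => if z i = y i then (if z i < b i then 1 else -1) else (y i - z i).sign,
    ⟨hz, fun i => ?_, fun i => ?_⟩, fun i hi => if_neg hi⟩ <;>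
    have := hab i <;> have := hz i <;> have := hy i <;>
    rcases Int.sign_sub_cases (z i) (y i) with ⟨h, hs⟩ | ⟨h, hs⟩ | ⟨h, hs⟩ <;>
    simp only [Pi.add_apply, hs] <;> split_ifs <;> omega

theorem hasPosCircuit_localGraphT_of_forall_stepToward {w : Fin n → ℤ} (hw : IsDir w)
    (hwy : ∀ i, z i ≠ y i → w i = (y i - z i).sign) (hne : z ≠ y) (hzy : NoStepToward F z y)
    (hstep : ∀ j, z j ≠ y j →
      ∃ i, z i ≠ y i ∧ 1 ≤ (y i - z i).sign * (F (stepToward z y j) i - z i)) :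
    HasPosCircuit (localGraphT F z w) := by
  refine hasPosCircuit_of_forall_exists_edge (w := w) (S := {i | z i ≠ y i})
    (fun i => by rcases hw i with h | h <;> simp [h]) (Function.ne_iff.mp hne) fun j hj => ?_
  obtain ⟨i, hi, h₁⟩ := hstep j hj
  refine ⟨i, hi, mem_localGraphT (hw i) (hw j) ?_ ?_⟩
  · rw [hwy i hi]
    exact hzy i hi
  · rwa [hwy i hi, hwy j hj]

theorem eq_of_noStepToward (hab : ∀ i, a i + 1 ≤ b i)
    (h : ∀ x v, InX' a b x v → ¬ HasPosCircuit (localGraphT F x v))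
    (hz : z ∈ StateSpace a b) (hy : y ∈ StateSpace a b)
    (hzy : NoStepToward F z y) (hyz : NoStepToward F y z) : z = y := by
  induction hd : l1Dist z y using Nat.strong_induction_on generalizing z with
  | _ d ih =>
  by_contra hne
  by_cases hstep : ∀ j, z j ≠ y j →
      ∃ i, z i ≠ y i ∧ 1 ≤ (y i - z i).sign * (F (stepToward z y j) i - z i)
  · obtain ⟨w, hw, hwy⟩ := exists_inX'_sign_sub hab hz hy
    exact h z w hw (hasPosCircuit_localGraphT_of_forall_stepToward hw.2.1 hwy hne hzy hstep)
  push Not at hstep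
  obtain ⟨j, hj, hfar⟩ := hstep
  replace hfar : ∀ i, z i ≠ y i → (y i - z i).sign * (F (stepToward z y j) i - z i) ≤ 0 :=
    fun i hi => by have := hfar i hi; omega
  have hy' : stepToward z y j = y :=
    ih _ (by have := l1Dist_stepToward hj; omega) (stepToward_mem hz hy j)
      (noStepToward_stepToward hj hfar) (hyz.stepToward_right j) rfl
  have hyj : y j = z j + (y j - z j).sign := by
    simpa only [stepToward, update_self] using (congrFun hy' j).symm
  have h₀ := hfar j hj
  have h₁ := hyz j (Ne.symm hj)
  rw [hy'] at h₀
  rcases Int.sign_sub_cases (z j) (y j) with ⟨h, hs⟩ | ⟨h, hs⟩ | ⟨h, hs⟩ <;>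
    rcases Int.sign_sub_cases (y j) (z j) with ⟨h', hs'⟩ | ⟨h', hs'⟩ | ⟨h', hs'⟩ <;>
    rw [hs] at h₀ hyj <;> rw [hs'] at h₁ <;> omega

theorem stateSpace_eq_Icc (a b : Fin n → ℤ) : StateSpace a b = Set.Icc a b := by
  ext x
  simp only [StateSpace, Set.mem_ofPred_eq, Set.mem_Icc, Pi.le_def, forall_and]

theorem finite_stateSpace (a b : Fin n → ℤ) : (StateSpace a b).Finite :=
  stateSpace_eq_Icc a b ▸ Set.finite_Icc a b

theorem IsTrapDomain.finite {A : Set (Fin n → ℤ)} (hA : IsTrapDomain a b F A) : A.Finite :=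
  (finite_stateSpace a b).subset hA.2.1

theorem isTrapDomain_stateSpace (hab : ∀ i, a i + 1 ≤ b i)
    (hF : ∀ x ∈ StateSpace a b, F x ∈ StateSpace a b) : IsTrapDomain a b F (StateSpace a b) := by
  refine ⟨⟨a, fun i => ⟨le_rfl, by linarith [hab i]⟩⟩, subset_rfl, ?_⟩
  rintro x hx _ ⟨i, -, rfl⟩
  exact stepToward_mem hx (hF x hx) i

theorem exists_isAttractor {A : Set (Fin n → ℤ)} (hA : IsTrapDomain a b F A) :
    ∃ B, IsAttractor a b F B := by
  have hfin : {B | IsTrapDomain a b F B}.Finite :=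
    (finite_stateSpace a b).finite_subsets.subset fun B hB => hB.2.1
  obtain ⟨B, hB⟩ := hfin.exists_minimal ⟨A, hA⟩
  exact ⟨B, hB.prop, fun C hC hCB => le_antisymm hCB (hB.2 hC hCB)⟩

theorem inter_nonempty_of_isTrapDomain (hab : ∀ i, a i + 1 ≤ b i)
    (h : ∀ x v, InX' a b x v → ¬ HasPosCircuit (localGraphT F x v))
    {A B : Set (Fin n → ℤ)} (hA : IsTrapDomain a b F A) (hB : IsTrapDomain a b F B) :
    (A ∩ B).Nonempty := by
  obtain ⟨⟨x, y⟩, ⟨hx, hy⟩, hmin⟩ :=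
    Set.exists_min_image _ (fun p => l1Dist p.1 p.2) (hA.finite.prod hB.finite) (hA.1.prod hB.1)
  have hxy : NoStepToward F x y :=
    noStepToward_of_forall_le hA.2.2 hx fun x' hx' => hmin (x', y) ⟨hx', hy⟩
  have hyx : NoStepToward F y x := noStepToward_of_forall_le hB.2.2 hy fun y' hy' => by
    rw [l1Dist_comm y, l1Dist_comm y']
    exact hmin (x, y') ⟨hx, hy'⟩
  have hxy_eq : x = y := eq_of_noStepToward hab h (hA.2.1 hx) (hB.2.1 hy) hxy hyx
  exact ⟨x, hx, hxy_eq ▸ hy⟩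

theorem IsAttractor.eq_of_inter_nonempty {A B : Set (Fin n → ℤ)} (hA : IsAttractor a b F A)
    (hB : IsAttractor a b F B) (hAB : (A ∩ B).Nonempty) : A = B := by
  have hAB' : IsTrapDomain a b F (A ∩ B) :=
    ⟨hAB, Set.inter_subset_left.trans hA.1.2.1,
      fun x hx y hxy => ⟨hA.1.2.2 x hx.1 y hxy, hB.1.2.2 x hx.2 y hxy⟩⟩
  exact (hA.2 _ hAB' Set.inter_subset_left).symm.trans (hB.2 _ hAB' Set.inter_subset_right)

end AsyncDynamics

/-- If no local interaction graph with thresholds `G_F(x,v)` has a positive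
circuit, then `Γ(F)` has exactly one attractor. -/
theorem stmt3 {n : ℕ} (a b : Fin n → ℤ) (hab : ∀ i, a i + 1 ≤ b i)
    (F : (Fin n → ℤ) → Fin n → ℤ)
    (hF : ∀ x ∈ StateSpace a b, F x ∈ StateSpace a b)
    (h : ∀ x v, InX' a b x v → ¬ HasPosCircuit (localGraphT F x v)) :
    ∃! A, IsAttractor a b F A := by
  obtain ⟨A, hA⟩ := exists_isAttractor (isTrapDomain_stateSpace hab hF)
  exact ⟨A, hA, fun B hB =>
    hB.eq_of_inter_nonempty hA (inter_nonempty_of_isTrapDomain hab h hB.1 hA.1)⟩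
end

section
/- Let X = ∏_{i=1}^n X_i be a product of n finite intervals of integers, each of cardinality at least 2, and let F be a map from X to itself. For each i ∈ {1,…,n}, let T_i(G_F) be the set of real numbers t for which there exists (x,v) ∈ X' such that t = x_i + v_i/2 and vertex i belongs to some positive circuit of G_F(x,v). If I ⊆ {1,…,n} is such that for every (x,v) ∈ X' every positive circuit of G_F(x,v) has at least one vertex in I, then the number of attractors of the asynchronous state transition graph Γ(F) is at most ∏_{i∈I} (|T_i(G_F)| + 1). -/
/-!
Induction on the number of states of the box `[a, b]`. If some `i ∈ I` carries a threshold
`θ = m + 1/2` on a positive circuit, cut the box into `x i ≤ m` and `x i ≥ m + 1` and clamp `F`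
into each half: every attractor of `F` contains an attractor of one of the clamped maps, clamping
creates no edges, and the `i`-th thresholds of the two halves lie below and above `θ`
respectively. Otherwise there is no positive circuit at all, and then there is at most one
attractor: a closest pair `x ∈ A`, `y ∈ B` of points of two attractors are fixed points of `F`
clamped into the box spanned by `x` and `y`. Finally a map without positive circuits has no two
fixed points `x ≠ y`. For each coordinate `k` where they differ let `z k` be `y` moved one step
towards `x` along `k`. Either some `F (z k)` is nowhere beyond `y` in the direction of `x`, and
then `x` and `z k` are fixed points of `F` clamped into the smaller box they span; or every
`F (z k)` passes `y` towards `x` in some coordinate `j`. That is an edge `k → j` of sign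
`v k * v j` in `G_F(y, v)`, `v` being the direction from `y` to `x`, and edges of this form
always close up into a positive circuit.
-/

namespace BoxDynamics

open Function

variable {n : ℕ}

section Boxes

variable {a b a' b' : Fin n → ℤ}

lemma mem_stateSpace_iff {x : Fin n → ℤ} : x ∈ StateSpace a b ↔ a ≤ x ∧ x ≤ b := by
  simp [StateSpace, Pi.le_def, forall_and]

lemma stateSpace_finite (a b : Fin n → ℤ) : (StateSpace a b).Finite :=
  (Set.finite_Icc a b).subset fun _ => mem_stateSpace_iff.1

lemma stateSpace_subset_stateSpace (ha : a ≤ a') (hb : b' ≤ b) :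
    StateSpace a' b' ⊆ StateSpace a b := fun _ hx =>
  mem_stateSpace_iff.2 ⟨ha.trans (mem_stateSpace_iff.1 hx).1, (mem_stateSpace_iff.1 hx).2.trans hb⟩

lemma ncard_stateSpace_lt {y : Fin n → ℤ} (ha : a ≤ a') (hb : b' ≤ b) (hy : y ∈ StateSpace a b)
    (hy' : y ∉ StateSpace a' b') : (StateSpace a' b').ncard < (StateSpace a b).ncard :=
  Set.ncard_lt_ncard (ssubset_of_subset_not_subset (stateSpace_subset_stateSpace ha hb)
    fun h => hy' (h hy)) (stateSpace_finite a b)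

lemma update_mem_stateSpace {x : Fin n → ℤ} (hx : x ∈ StateSpace a b) {i : Fin n} {r : ℤ}
    (hr : a i ≤ r ∧ r ≤ b i) : update x i r ∈ StateSpace a b := by
  intro j
  rcases eq_or_ne j i with rfl | hj
  · simpa using hr
  · simpa [hj] using hx j

lemma stateSpace_subset_union_update (a b : Fin n → ℤ) (i : Fin n) (m : ℤ) :
    StateSpace a b ⊆ StateSpace a (update b i m) ∪ StateSpace (update a i (m + 1)) b := by
  intro x hx
  by_cases h : x i ≤ m
  · refine Or.inl fun j => ?_
    rcases eq_or_ne j i with rfl | hj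
    · simpa using ⟨(hx j).1, h⟩
    · simpa [hj] using hx j
  · refine Or.inr fun j => ?_
    rcases eq_or_ne j i with rfl | hj
    · simpa using ⟨by omega, (hx j).2⟩
    · simpa [hj] using hx j

def clampTo (a b w : Fin n → ℤ) : Fin n → ℤ := fun i => max (a i) (min (b i) (w i))

lemma clampTo_eq_self {w : Fin n → ℤ} (hw : w ∈ StateSpace a b) : clampTo a b w = w :=
  funext fun i => by simp [clampTo, (hw i).1, (hw i).2]

lemma lt_of_clampTo_lt {w w' : Fin n → ℤ} {i : Fin n} (h : clampTo a b w i < clampTo a b w' i) :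
    w i < w' i := by
  simp only [clampTo] at h
  omega

lemma clampTo_lt_iff {w : Fin n → ℤ} {i : Fin n} {t : ℚ} (ha : a i < t) (hb : t < b i) :
    (clampTo a b w i : ℚ) < t ↔ (w i : ℚ) < t := by
  simp only [clampTo, Int.cast_max, Int.cast_min, max_lt_iff, min_lt_iff, ha, hb.not_gt]
  simp

lemma lt_clampTo_iff {w : Fin n → ℤ} {i : Fin n} {t : ℚ} (ha : a i < t) (hb : t < b i) :
    t < (clampTo a b w i : ℚ) ↔ t < (w i : ℚ) := by
  simp only [clampTo, Int.cast_max, Int.cast_min, lt_max_iff, lt_min_iff, ha.not_gt, hb]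
  simp

lemma bothSides_clampTo_iff {w w' : Fin n → ℤ} {i : Fin n} {t : ℚ} (ha : a i < t)
    (hb : t < b i) :
    BothSides (clampTo a b w i) (clampTo a b w' i) t ↔ BothSides (w i) (w' i) t := by
  simp only [BothSides, clampTo_lt_iff ha hb, lt_clampTo_iff ha hb]

end Boxes

section Graphs

variable {a b a' b' : Fin n → ℤ} {F : (Fin n → ℤ) → Fin n → ℤ} {x v : Fin n → ℤ}

lemma IsPosCircuit.mono {E E' : Set (SEdge n)} (h : E ⊆ E') {c : List (SEdge n)}
    (hc : IsPosCircuit E c) : IsPosCircuit E' c :=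
  ⟨⟨hc.1.1, fun e he => h (hc.1.2.1 e he), hc.1.2.2⟩, hc.2⟩

lemma MemPosCircuit.mono {E E' : Set (SEdge n)} (h : E ⊆ E') {i : Fin n}
    (hi : MemPosCircuit E i) : MemPosCircuit E' i :=
  let ⟨c, hc, hic⟩ := hi
  ⟨c, IsPosCircuit.mono h hc, hic⟩

lemma HasPosCircuit.mono {E E' : Set (SEdge n)} (h : E ⊆ E') (hE : HasPosCircuit E) :
    HasPosCircuit E' :=
  let ⟨c, hc⟩ := hE
  ⟨c, IsPosCircuit.mono h hc⟩

lemma IsPFVS.anti {E E' : Set (SEdge n)} (h : E ⊆ E') {I : Finset (Fin n)} (hI : IsPFVS E' I) :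
    IsPFVS E I :=
  fun c hc => hI c (IsPosCircuit.mono h hc)

def AdmissibleAt (a b x v : Fin n → ℤ) (k : Fin n) : Prop :=
  x ∈ StateSpace a b ∧ (v k = 1 ∨ v k = -1) ∧ a k ≤ x k + v k ∧ x k + v k ≤ b k

lemma AdmissibleAt.mono (ha : a ≤ a') (hb : b' ≤ b) {k : Fin n} (h : AdmissibleAt a' b' x v k) :
    AdmissibleAt a b x v k :=
  ⟨stateSpace_subset_stateSpace ha hb h.1, h.2.1, (ha k).trans h.2.2.1, h.2.2.2.trans (hb k)⟩

lemma AdmissibleAt.exists_threshold_eq {K : Type*} [Field K] [LinearOrder K]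
    [IsStrictOrderedRing K] {k : Fin n} (h : AdmissibleAt a b x v k) :
    ∃ m : ℤ, a k ≤ m ∧ m + 1 ≤ b k ∧ (x k : K) + v k / 2 = m + 1 / 2 := by
  have := h.1 k
  have := h.2.2
  rcases h.2.1 with hv | hv
  · exact ⟨x k, by omega, by omega, by rw [hv]; push_cast; ring⟩
  · exact ⟨x k - 1, by omega, by omega, by rw [hv]; push_cast; ring⟩

/-- `G_F(x, v)` on a box some of whose intervals may be singletons, so that `X'` may be empty:
`(x, v)` only has to be admissible at the two ends of an edge. -/
def boxGraph (a b : Fin n → ℤ) (F : (Fin n → ℤ) → Fin n → ℤ) (x v : Fin n → ℤ) :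
    Set (SEdge n) :=
  {e | e ∈ localGraphT F x v ∧ AdmissibleAt a b x v e.1 ∧ AdmissibleAt a b x v e.2.2}

def boxThresholds (a b : Fin n → ℤ) (F : (Fin n → ℤ) → Fin n → ℤ) (i : Fin n) : Set ℝ :=
  {t | ∃ x v, t = (x i : ℝ) + (v i : ℝ) / 2 ∧ MemPosCircuit (boxGraph a b F x v) i}

lemma mem_localGraph_of_mem_localGraph_clampTo {j i : Fin n} {s : ℤ} (hv : v j = 1 ∨ v j = -1)
    (h : (j, s, i) ∈ localGraph (clampTo a b ∘ F) x v) : (j, s, i) ∈ localGraph F x v := by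
  rcases hv with hv | hv <;>
    simp only [localGraph, Set.mem_ofPred_eq, jac, hv, Int.ediv_one, Int.ediv_neg, comp_apply,
      neg_pos, neg_lt_zero, sub_pos, sub_neg] at h ⊢ <;>
    exact h.imp (And.imp_right lt_of_clampTo_lt) (And.imp_right lt_of_clampTo_lt)

lemma boxGraph_clampTo_subset (ha : a ≤ a') (hb : b' ≤ b) :
    boxGraph a' b' (clampTo a' b' ∘ F) x v ⊆ boxGraph a b F x v := by
  rintro ⟨j, s, i⟩ ⟨⟨hsign, hsides⟩, hj, hi⟩
  refine ⟨⟨mem_localGraph_of_mem_localGraph_clampTo hj.2.1 hsign, ?_⟩, hj.mono ha hb,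
    hi.mono ha hb⟩
  obtain ⟨m, ham, hmb, ht⟩ := hi.exists_threshold_eq (K := ℚ)
  have ham' : (a' i : ℚ) ≤ m := by exact_mod_cast ham
  have hmb' : (m : ℚ) + 1 ≤ b' i := by exact_mod_cast hmb
  exact (bothSides_clampTo_iff (by dsimp only; linarith) (by dsimp only; linarith)).1 hsides

lemma admissibleAt_of_memPosCircuit {i : Fin n} (h : MemPosCircuit (boxGraph a b F x v) i) :
    AdmissibleAt a b x v i := by
  obtain ⟨c, hc, hi⟩ := h
  obtain ⟨e, he, rfl⟩ := List.mem_map.1 hi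
  exact (hc.1.2.1 e he).2.1

lemma exists_eq_of_mem_boxThresholds {i : Fin n} {t : ℝ} (ht : t ∈ boxThresholds a b F i) :
    ∃ m : ℤ, a i ≤ m ∧ m + 1 ≤ b i ∧ t = m + 1 / 2 := by
  obtain ⟨x, v, rfl, hmem⟩ := ht
  exact (admissibleAt_of_memPosCircuit hmem).exists_threshold_eq

lemma boxThresholds_finite (a b : Fin n → ℤ) (F : (Fin n → ℤ) → Fin n → ℤ) (i : Fin n) :
    (boxThresholds a b F i).Finite :=
  ((Set.finite_Icc (a i) (b i)).image fun m : ℤ => (m : ℝ) + 1 / 2).subset fun _ ht => by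
    obtain ⟨m, ham, hmb, rfl⟩ := exists_eq_of_mem_boxThresholds ht
    exact ⟨m, ⟨ham, by omega⟩, rfl⟩

lemma boxThresholds_clampTo_subset (ha : a ≤ a') (hb : b' ≤ b) (i : Fin n) :
    boxThresholds a' b' (clampTo a' b' ∘ F) i ⊆ boxThresholds a b F i :=
  fun _ ⟨x, v, ht, hmem⟩ => ⟨x, v, ht, MemPosCircuit.mono (boxGraph_clampTo_subset ha hb) hmem⟩

lemma boxThresholds_update_upper_subset_Iio (G : (Fin n → ℤ) → Fin n → ℤ) (i : Fin n) (m : ℤ) :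
    boxThresholds a (update b i m) G i ⊆ Set.Iio ((m : ℝ) + 1 / 2) := fun _ ht => by
  obtain ⟨m', -, hm', rfl⟩ := exists_eq_of_mem_boxThresholds ht
  have : (m' : ℝ) + 1 ≤ m := by exact_mod_cast (by simpa using hm')
  exact (by linarith : (m' : ℝ) + 1 / 2 < m + 1 / 2)

lemma boxThresholds_update_lower_subset_Ioi (G : (Fin n → ℤ) → Fin n → ℤ) (i : Fin n) (m : ℤ) :
    boxThresholds (update a i (m + 1)) b G i ⊆ Set.Ioi ((m : ℝ) + 1 / 2) := fun _ ht => by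
  obtain ⟨m', hm', -, rfl⟩ := exists_eq_of_mem_boxThresholds ht
  have : (m : ℝ) + 1 ≤ m' := by exact_mod_cast (by simpa using hm')
  exact (by linarith : (m : ℝ) + 1 / 2 < m' + 1 / 2)

end Graphs

section Circuits

lemma prod_map_range_mul_succ {u : ℕ → ℤ} (hu : ∀ t, u t = 1 ∨ u t = -1) (P : ℕ) :
    ((List.range P).map fun t => u t * u (t + 1)).prod = u 0 * u P := by
  induction P with
  | zero => rcases hu 0 with h | h <;> simp [h]
  | succ P ih =>
    rw [List.range_succ, List.map_append, List.prod_append, ih]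
    rcases hu P with h | h <;> simp [h]

lemma isPosCircuit_of_periodic {E : Set (SEdge n)} {g : ℕ → Fin n} {u : Fin n → ℤ} {P : ℕ}
    (hP : 0 < P) (hper : g P = g 0) (hinj : Set.InjOn g (Set.Iio P))
    (hu : ∀ t, u (g t) = 1 ∨ u (g t) = -1)
    (hE : ∀ t < P, (g t, u (g t) * u (g (t + 1)), g (t + 1)) ∈ E) :
    IsPosCircuit E ((List.range P).map fun t => (g t, u (g t) * u (g (t + 1)), g (t + 1))) := by
  refine ⟨⟨by simp [hP.ne'], ?_, fun _ _ => by simp,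
    by simp [List.getLast?_range, List.head?_range, hP.ne', Nat.sub_add_cancel hP, hper], ?_⟩, ?_⟩
  · simp only [List.mem_map, List.mem_range]
    rintro _ ⟨t, ht, rfl⟩
    exact hE t ht
  · rw [List.map_map]
    exact List.nodup_range.map_on fun s hs t ht => hinj (List.mem_range.1 hs) (List.mem_range.1 ht)
  · rw [List.map_map]
    have := prod_map_range_mul_succ hu P
    simp only [comp_def] at this ⊢
    rw [this, hper]
    rcases hu 0 with h | h <;> simp [h]

/-- Circuits of edges `k → j` of sign `u k * u j` are positive, as the signs telescope. -/
theorem hasPosCircuit_of_forall_exists_edge {E : Set (SEdge n)} {D : Set (Fin n)}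
    (hD : D.Nonempty) {u : Fin n → ℤ} (hu : ∀ k ∈ D, u k = 1 ∨ u k = -1)
    (hE : ∀ k ∈ D, ∃ j ∈ D, (k, u k * u j, j) ∈ E) : HasPosCircuit E := by
  choose! f hfD hfE using hE
  obtain ⟨k₀, hk₀⟩ := hD
  have horbit : ∀ t, f^[t] k₀ ∈ D := fun t => by
    induction t with
    | zero => exact hk₀
    | succ t ih => rw [iterate_succ_apply']; exact hfD _ ih
  obtain ⟨s, t, hst, heq⟩ := Finite.exists_ne_map_eq_of_infinite fun t => f^[t] k₀
  wlog hlt : s < t generalizing s t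
  · exact this t s hst.symm heq.symm (by omega)
  set z := f^[s] k₀
  have hz : z ∈ periodicPts f := mk_mem_periodicPts (n := t - s) (by omega) <| by
    change f^[t - s] (f^[s] k₀) = f^[s] k₀
    rw [← iterate_add_apply, Nat.sub_add_cancel hlt.le]
    exact heq.symm
  have hzD : ∀ t, f^[t] z ∈ D := fun t => by rw [← iterate_add_apply]; exact horbit _
  exact ⟨_, isPosCircuit_of_periodic (g := fun t => f^[t] z) (u := u)
    (minimalPeriod_pos_of_mem_periodicPts hz) iterate_minimalPeriod
    iterate_injOn_Iio_minimalPeriod (fun t => hu _ (hzD t))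
    fun t _ => by simp only [iterate_succ_apply']; exact hfE _ (hzD t)⟩

end Circuits

section FixedPoints

variable {a b : Fin n → ℤ} {F : (Fin n → ℤ) → Fin n → ℤ} {x y : Fin n → ℤ}

lemma mem_boxGraph_of_isFixedPt {w : Fin n → ℤ} {j k : Fin n} (hk : AdmissibleAt a b x w k)
    (hj : AdmissibleAt a b x w j) (hFx : IsFixedPt F x)
    (hmove : 0 < w j * (F (update x k (x k + w k)) j - x j)) :
    (k, w k * w j, j) ∈ boxGraph a b F x w := by
  refine ⟨⟨?_, ?_⟩, hk, hj⟩
  · simp only [localGraph, Set.mem_ofPred_eq, jac, hFx.eq]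
    rcases hk.2.1 with h1 | h1 <;> rcases hj.2.1 with h2 | h2 <;> simp [h1, h2] at hmove ⊢ <;>
      omega
  · change BothSides (F x j) _ _
    rw [hFx.eq]
    rcases hj.2.1 with h | h <;> rw [h] at hmove ⊢
    · have : (x j : ℚ) + 1 ≤ F (update x k (x k + w k)) j := by exact_mod_cast (by omega)
      left; constructor <;> push_cast <;> linarith
    · have : (F (update x k (x k + w k)) j : ℚ) ≤ x j - 1 := by exact_mod_cast (by omega)
      right; constructor <;> push_cast <;> linarith

def stepToward (x y : Fin n → ℤ) : Fin n → ℤ := fun k => if x k < y k then -1 else 1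

lemma stepToward_cases (x y : Fin n → ℤ) (k : Fin n) :
    (x k < y k ∧ stepToward x y k = -1) ∨ (y k ≤ x k ∧ stepToward x y k = 1) := by
  by_cases h : x k < y k
  · exact Or.inl ⟨h, if_pos h⟩
  · exact Or.inr ⟨not_lt.1 h, if_neg h⟩

lemma admissibleAt_stepToward (hx : x ∈ StateSpace a b) (hy : y ∈ StateSpace a b) {k : Fin n}
    (hk : x k ≠ y k) : AdmissibleAt a b y (stepToward x y) k := by
  have := hx k
  have := hy k
  have := stepToward_cases x y k
  exact ⟨hy, by omega, by omega, by omega⟩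

lemma clampTo_inf_sup_update_stepToward {u z : Fin n → ℤ} {k : Fin n} (hk : x k ≠ y k)
    (hu : ∀ j, x j ≠ y j → stepToward x y j * (u j - y j) ≤ 0)
    (hz : z = update y k (y k + stepToward x y k)) : clampTo (x ⊓ z) (x ⊔ z) u = z := by
  subst hz
  funext j
  change max (x j ⊓ _) (min (x j ⊔ _) (u j)) = _
  rcases eq_or_ne j k with rfl | hjk
  · simp only [update_self]
    have := hu j hk
    rcases stepToward_cases x y j with ⟨_, h⟩ | ⟨_, h⟩ <;> rw [h] at this ⊢ <;> omega
  · simp only [update_of_ne hjk]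
    by_cases hj : x j = y j
    · omega
    · have := hu j hj
      rcases stepToward_cases x y j with ⟨_, h⟩ | ⟨_, h⟩ <;> rw [h] at this <;> omega

theorem eq_of_isFixedPt_of_forall_not_hasPosCircuit
    (hpos : ∀ x v, ¬ HasPosCircuit (boxGraph a b F x v)) (hx : x ∈ StateSpace a b)
    (hy : y ∈ StateSpace a b) (hFx : IsFixedPt F x) (hFy : IsFixedPt F y) : x = y := by
  induction hN : (StateSpace a b).ncard using Nat.strong_induction_on generalizing a b F y with
  | _ N ih =>
  by_contra hxy
  by_cases hsink : ∃ k, x k ≠ y k ∧ ∀ j, x j ≠ y j →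
    stepToward x y j * (F (update y k (y k + stepToward x y k)) j - y j) ≤ 0
  · obtain ⟨k, hk, hsink⟩ := hsink
    set z := update y k (y k + stepToward x y k) with hz
    have hzS : z ∈ StateSpace a b :=
      update_mem_stateSpace hy (admissibleAt_stepToward hx hy hk).2.2
    have hxz : x ≠ z := fun h => by
      have := hsink k hk
      rw [← h, hFx.eq] at this
      rcases stepToward_cases x y k with ⟨_, h'⟩ | ⟨_, h'⟩ <;> rw [h'] at this <;> omega
    have hyz : y ∉ StateSpace (x ⊓ z) (x ⊔ z) := fun h => by
      have := h k
      simp only [z, Pi.inf_apply, Pi.sup_apply, update_self] at this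
      have := stepToward_cases x y k
      omega
    have hap : a ≤ x ⊓ z := le_inf (mem_stateSpace_iff.1 hx).1 (mem_stateSpace_iff.1 hzS).1
    have hqb : x ⊔ z ≤ b := sup_le (mem_stateSpace_iff.1 hx).2 (mem_stateSpace_iff.1 hzS).2
    have hxS : x ∈ StateSpace (x ⊓ z) (x ⊔ z) := mem_stateSpace_iff.2 ⟨inf_le_left, le_sup_left⟩
    refine hxz (ih _ (hN ▸ ncard_stateSpace_lt hap hqb hy hyz)
      (fun x' v' h => hpos x' v' (HasPosCircuit.mono (boxGraph_clampTo_subset hap hqb) h)) hxS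
      (mem_stateSpace_iff.2 ⟨inf_le_right, le_sup_right⟩) ?_
      (clampTo_inf_sup_update_stepToward hk hsink hz) rfl)
    simp only [IsFixedPt, comp_apply, hFx.eq, clampTo_eq_self hxS]
  · push Not at hsink
    refine hpos y (stepToward x y) (hasPosCircuit_of_forall_exists_edge (D := {k | x k ≠ y k})
      (ne_iff.1 hxy) (fun k hk => (admissibleAt_stepToward hx hy hk).2.1) fun k hk => ?_)
    obtain ⟨j, hj, hmove⟩ := hsink k hk
    exact ⟨j, hj, mem_boxGraph_of_isFixedPt (admissibleAt_stepToward hx hy hk)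
      (admissibleAt_stepToward hx hy hj) hFy hmove⟩

end FixedPoints

section Attractors

variable {a b : Fin n → ℤ} {F : (Fin n → ℤ) → Fin n → ℤ} {A : Set (Fin n → ℤ)}

lemma IsAttractor.eq_of_inter_nonempty {B : Set (Fin n → ℤ)} (hA : IsAttractor a b F A)
    (hB : IsAttractor a b F B) (h : (A ∩ B).Nonempty) : A = B := by
  have hT : IsTrapDomain a b F (A ∩ B) :=
    ⟨h, Set.inter_subset_left.trans hA.1.2.1,
      fun x hx y hy => ⟨hA.1.2.2 x hx.1 y hy, hB.1.2.2 x hx.2 y hy⟩⟩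
  exact (hA.2 _ hT Set.inter_subset_left).symm.trans (hB.2 _ hT Set.inter_subset_right)

lemma finite_setOf_isAttractor (a b : Fin n → ℤ) (F : (Fin n → ℤ) → Fin n → ℤ) :
    {A | IsAttractor a b F A}.Finite :=
  (stateSpace_finite a b).finite_subsets.subset fun _ hA => hA.1.2.1

lemma IsTrapDomain.exists_isAttractor_subset (hA : IsTrapDomain a b F A) :
    ∃ B ⊆ A, IsAttractor a b F B := by
  have hfin : {B | IsTrapDomain a b F B ∧ B ⊆ A}.Finite :=
    (stateSpace_finite a b).finite_subsets.subset fun _ hB => hB.1.2.1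
  obtain ⟨B, hBA, hB⟩ := hfin.isPWO.exists_le_minimal ⟨hA, subset_rfl⟩
  exact ⟨B, hBA, hB.1.1, fun C hC hCB => le_antisymm hCB (hB.2 ⟨hC, hCB.trans hBA⟩ hCB)⟩

lemma async_of_async_clampTo {a' b' x y : Fin n → ℤ} (hx : x ∈ StateSpace a' b')
    (h : Async (clampTo a' b' ∘ F) x y) : Async F x y ∧ y ∈ StateSpace a' b' := by
  obtain ⟨i, hne, rfl⟩ := h
  have hxi := hx i
  simp only [comp_apply, clampTo] at hne ⊢
  rcases lt_or_gt_of_ne hne with hlt | hgt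
  · rw [Int.sign_eq_neg_one_of_neg (by omega)]
    refine ⟨⟨i, by omega, by rw [Int.sign_eq_neg_one_of_neg (by omega)]⟩, ?_⟩
    exact update_mem_stateSpace hx ⟨by omega, by omega⟩
  · rw [Int.sign_eq_one_of_pos (by omega)]
    refine ⟨⟨i, by omega, by rw [Int.sign_eq_one_of_pos (by omega)]⟩, ?_⟩
    exact update_mem_stateSpace hx ⟨by omega, by omega⟩

lemma IsTrapDomain.inter_stateSpace {a' b' : Fin n → ℤ} (hA : IsTrapDomain a b F A)
    (hne : (A ∩ StateSpace a' b').Nonempty) :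
    IsTrapDomain a' b' (clampTo a' b' ∘ F) (A ∩ StateSpace a' b') :=
  ⟨hne, Set.inter_subset_right, fun x hx y hxy =>
    ⟨hA.2.2 x hx.1 y (async_of_async_clampTo hx.2 hxy).1, (async_of_async_clampTo hx.2 hxy).2⟩⟩

lemma ncard_setOf_isAttractor_le {S : Set (Set (Fin n → ℤ))} (hS : S.Finite)
    (h : ∀ A, IsAttractor a b F A → ∃ B ∈ S, B.Nonempty ∧ B ⊆ A) :
    {A | IsAttractor a b F A}.ncard ≤ S.ncard := by
  choose! g hgS hgne hgA using h
  refine Set.ncard_le_ncard_of_injOn g hgS (fun A hA A' hA' hAA' => ?_) hS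
  obtain ⟨z, hz⟩ := hgne A hA
  exact IsAttractor.eq_of_inter_nonempty hA hA' ⟨z, hgA A hA hz, hgA A' hA' (hAA' ▸ hz)⟩

lemma ncard_setOf_isAttractor_le_add {a₁ b₁ a₂ b₂ : Fin n → ℤ}
    (hcover : StateSpace a b ⊆ StateSpace a₁ b₁ ∪ StateSpace a₂ b₂) :
    {A | IsAttractor a b F A}.ncard ≤ {A | IsAttractor a₁ b₁ (clampTo a₁ b₁ ∘ F) A}.ncard +
      {A | IsAttractor a₂ b₂ (clampTo a₂ b₂ ∘ F) A}.ncard := by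
  refine (ncard_setOf_isAttractor_le ((finite_setOf_isAttractor _ _ _).union
    (finite_setOf_isAttractor _ _ _)) fun A hA => ?_).trans (Set.ncard_union_le _ _)
  obtain ⟨x, hx⟩ := hA.1.1
  rcases hcover (hA.1.2.1 hx) with h | h
  · obtain ⟨B, hBA, hB⟩ :=
      IsTrapDomain.exists_isAttractor_subset (IsTrapDomain.inter_stateSpace hA.1 ⟨x, hx, h⟩)
    exact ⟨B, Or.inl hB, hB.1.1, hBA.trans Set.inter_subset_left⟩
  · obtain ⟨B, hBA, hB⟩ :=
      IsTrapDomain.exists_isAttractor_subset (IsTrapDomain.inter_stateSpace hA.1 ⟨x, hx, h⟩)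
    exact ⟨B, Or.inr hB, hB.1.1, hBA.trans Set.inter_subset_left⟩

def l1Dist (x y : Fin n → ℤ) : ℕ := ∑ i, (x i - y i).natAbs

lemma l1Dist_comm (x y : Fin n → ℤ) : l1Dist x y = l1Dist y x :=
  Finset.sum_congr rfl fun i _ => by omega

lemma l1Dist_update_lt {x y : Fin n → ℤ} {i : Fin n} {r : ℤ}
    (h : (r - y i).natAbs < (x i - y i).natAbs) : l1Dist (update x i r) y < l1Dist x y := by
  refine Finset.sum_lt_sum (fun j _ => ?_) ⟨i, Finset.mem_univ i, by simpa using h⟩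
  rcases eq_or_ne j i with rfl | hj
  · simpa using h.le
  · simp [hj]

/-- A step of `Γ(F)` from `x` towards `y` would stay in `A` and get closer to `y`. -/
lemma clampTo_inf_sup_eq_of_nearest (hA : IsTrapDomain a b F A) {x y : Fin n → ℤ} (hx : x ∈ A)
    (hnear : ∀ x' ∈ A, l1Dist x y ≤ l1Dist x' y) : clampTo (x ⊓ y) (x ⊔ y) (F x) = x := by
  funext i
  by_contra hne
  change max (x i ⊓ y i) (min (x i ⊔ y i) (F x i)) ≠ x i at hne
  have hstep : Async F x (update x i (x i + (F x i - x i).sign)) := ⟨i, by omega, rfl⟩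
  refine (hnear _ (hA.2.2 x hx _ hstep)).not_gt (l1Dist_update_lt ?_)
  rcases lt_or_gt_of_ne (show F x i ≠ x i by omega) with h | h
  · rw [Int.sign_eq_neg_one_of_neg (by omega)]; omega
  · rw [Int.sign_eq_one_of_pos (by omega)]; omega

theorem ncard_setOf_isAttractor_le_one (hpos : ∀ x v, ¬ HasPosCircuit (boxGraph a b F x v)) :
    {A | IsAttractor a b F A}.ncard ≤ 1 := by
  refine (Set.ncard_le_one (finite_setOf_isAttractor a b F)).2 fun A hA B hB => ?_
  by_contra hAB
  have hfin : (A ×ˢ B).Finite :=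
    ((stateSpace_finite a b).subset hA.1.2.1).prod ((stateSpace_finite a b).subset hB.1.2.1)
  obtain ⟨⟨x, y⟩, ⟨hx, hy⟩, hmin⟩ :=
    Set.exists_min_image _ (fun p => l1Dist p.1 p.2) hfin (hA.1.1.prod hB.1.1)
  have hGx : IsFixedPt (clampTo (x ⊓ y) (x ⊔ y) ∘ F) x :=
    clampTo_inf_sup_eq_of_nearest hA.1 hx fun x' hx' => hmin (x', y) ⟨hx', hy⟩
  have hGy : IsFixedPt (clampTo (x ⊓ y) (x ⊔ y) ∘ F) y := by
    rw [IsFixedPt, comp_apply, inf_comm, sup_comm]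
    exact clampTo_inf_sup_eq_of_nearest hB.1 hy fun y' hy' => by
      simpa only [l1Dist_comm] using hmin (x, y') ⟨hx, hy'⟩
  have hxS := mem_stateSpace_iff.1 (hA.1.2.1 hx)
  have hyS := mem_stateSpace_iff.1 (hB.1.2.1 hy)
  have hxy : x = y := eq_of_isFixedPt_of_forall_not_hasPosCircuit
    (fun x' v' h => hpos x' v' (HasPosCircuit.mono
      (boxGraph_clampTo_subset (le_inf hxS.1 hyS.1) (sup_le hxS.2 hyS.2)) h))
    (mem_stateSpace_iff.2 ⟨inf_le_left, le_sup_left⟩)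
    (mem_stateSpace_iff.2 ⟨inf_le_right, le_sup_right⟩) hGx hGy
  exact hAB (IsAttractor.eq_of_inter_nonempty hA hB ⟨x, hx, hxy ▸ hy⟩)

end Attractors

section Counting

variable {a b : Fin n → ℤ} {F : (Fin n → ℤ) → Fin n → ℤ}

lemma ncard_add_ncard_lt_of_subset_Iio_Ioi {T T₁ T₂ : Set ℝ} (hT : T.Finite) {θ : ℝ}
    (hθ : θ ∈ T) (h₁ : T₁ ⊆ T ∩ Set.Iio θ) (h₂ : T₂ ⊆ T ∩ Set.Ioi θ) :
    T₁.ncard + T₂.ncard < T.ncard := by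
  have hdisj : Disjoint T₁ T₂ := Set.disjoint_left.2 fun t ht₁ ht₂ =>
    lt_asymm (Set.mem_Iio.1 (h₁ ht₁).2) (Set.mem_Ioi.1 (h₂ ht₂).2)
  have hsub : T₁ ∪ T₂ ⊆ T \ {θ} := Set.union_subset
    (fun t ht => ⟨(h₁ ht).1, (h₁ ht).2.ne⟩) (fun t ht => ⟨(h₂ ht).1, (h₂ ht).2.ne'⟩)
  have hle := Set.ncard_le_ncard hsub hT.sdiff
  rw [Set.ncard_union_eq hdisj (hT.subset fun t ht => (h₁ ht).1)
    (hT.subset fun t ht => (h₂ ht).1), Set.ncard_sdiff_singleton_of_mem hθ] at hle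
  have := (Set.ncard_pos hT).2 ⟨θ, hθ⟩
  omega

lemma ncard_boxThresholds_update_add_le {i : Fin n} {m : ℤ} (ham : a i ≤ m) (hmb : m + 1 ≤ b i)
    (hθ : (m : ℝ) + 1 / 2 ∈ boxThresholds a b F i) :
    (boxThresholds a (update b i m) (clampTo a (update b i m) ∘ F) i).ncard + 1 +
      ((boxThresholds (update a i (m + 1)) b (clampTo (update a i (m + 1)) b ∘ F) i).ncard + 1)
      ≤ (boxThresholds a b F i).ncard + 1 := by
  have hT₁ := Set.subset_inter
    (boxThresholds_clampTo_subset le_rfl (update_le_self_iff.2 (by omega)) i)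
    (boxThresholds_update_upper_subset_Iio (a := a) (b := b) (clampTo a (update b i m) ∘ F) i m)
  have hT₂ := Set.subset_inter
    (boxThresholds_clampTo_subset (le_update_self_iff.2 (by omega)) le_rfl i)
    (boxThresholds_update_lower_subset_Ioi (a := a) (b := b)
      (clampTo (update a i (m + 1)) b ∘ F) i m)
  have := ncard_add_ncard_lt_of_subset_Iio_Ioi (boxThresholds_finite a b F i) hθ hT₁ hT₂
  omega

theorem ncard_setOf_isAttractor_le_prod {I : Finset (Fin n)}
    (hI : ∀ x v, IsPFVS (boxGraph a b F x v) I) :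
    {A | IsAttractor a b F A}.ncard ≤ ∏ i ∈ I, ((boxThresholds a b F i).ncard + 1) := by
  induction hN : (StateSpace a b).ncard using Nat.strong_induction_on generalizing a b F with
  | _ N ih =>
  by_cases hT : ∃ i ∈ I, (boxThresholds a b F i).Nonempty
  · obtain ⟨i, hi, -, x, v, rfl, hmem⟩ := hT
    have hadm := admissibleAt_of_memPosCircuit hmem
    obtain ⟨m, ham, hmb, hθ⟩ := hadm.exists_threshold_eq (K := ℝ)
    have hθT : (m : ℝ) + 1 / 2 ∈ boxThresholds a b F i := hθ ▸ ⟨x, v, rfl, hmem⟩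
    set b₁ := update b i m
    set a₂ := update a i (m + 1)
    have hb₁ : b₁ ≤ b := update_le_self_iff.2 (by omega)
    have ha₂ : a ≤ a₂ := le_update_self_iff.2 (by omega)
    have hlt₁ := ncard_stateSpace_lt le_rfl hb₁ (update_mem_stateSpace hadm.1 ⟨by omega, hmb⟩)
      fun h => by simpa [b₁] using (h i).2
    have hlt₂ := ncard_stateSpace_lt ha₂ le_rfl (update_mem_stateSpace hadm.1 ⟨ham, by omega⟩)
      fun h => by simpa [a₂] using (h i).1
    have hI₁ : ∀ x v, IsPFVS (boxGraph a b₁ (clampTo a b₁ ∘ F) x v) I :=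
      fun x v => IsPFVS.anti (boxGraph_clampTo_subset le_rfl hb₁) (hI x v)
    have hI₂ : ∀ x v, IsPFVS (boxGraph a₂ b (clampTo a₂ b ∘ F) x v) I :=
      fun x v => IsPFVS.anti (boxGraph_clampTo_subset ha₂ le_rfl) (hI x v)
    refine (ncard_setOf_isAttractor_le_add (stateSpace_subset_union_update a b i m)).trans <|
      (add_le_add (ih _ (hN ▸ hlt₁) hI₁ rfl) (ih _ (hN ▸ hlt₂) hI₂ rfl)).trans <|
      Finset.prod_add_prod_le hi (ncard_boxThresholds_update_add_le ham hmb hθT)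
        (fun j _ _ => ?_) (fun j _ _ => ?_) (fun _ _ => Nat.zero_le _) (fun _ _ => Nat.zero_le _)
    · exact Nat.add_le_add_right (Set.ncard_le_ncard (boxThresholds_clampTo_subset le_rfl hb₁ j)
        (boxThresholds_finite a b F j)) 1
    · exact Nat.add_le_add_right (Set.ncard_le_ncard (boxThresholds_clampTo_subset ha₂ le_rfl j)
        (boxThresholds_finite a b F j)) 1
  · push Not at hT
    refine (ncard_setOf_isAttractor_le_one fun x v ⟨c, hc⟩ => ?_).trans
      (Finset.prod_pos fun _ _ => Nat.succ_pos _)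
    obtain ⟨i, hi, hic⟩ := hI x v c hc
    exact Set.eq_empty_iff_forall_notMem.1 (hT i hi) _ ⟨x, v, rfl, c, hc, hic⟩

end Counting

section LocalGraph

variable {a b : Fin n → ℤ} {F : (Fin n → ℤ) → Fin n → ℤ} {x v : Fin n → ℤ}

lemma admissibleAt_of_inX' (h : InX' a b x v) (k : Fin n) : AdmissibleAt a b x v k :=
  ⟨h.1, h.2.1 k, (h.2.2 k).1, (h.2.2 k).2⟩

lemma boxGraph_eq_localGraphT (h : InX' a b x v) : boxGraph a b F x v = localGraphT F x v :=
  Set.ext fun _ =>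
    ⟨fun he => he.1, fun he => ⟨he, admissibleAt_of_inX' h _, admissibleAt_of_inX' h _⟩⟩

lemma mem_localGraphT_congr {v' : Fin n → ℤ} {j i : Fin n} {s : ℤ} (hj : v' j = v j)
    (hi : v' i = v i) : (j, s, i) ∈ localGraphT F x v' ↔ (j, s, i) ∈ localGraphT F x v := by
  simp only [localGraphT, localGraph, jac, Set.mem_ofPred_eq, hj, hi]

lemma boxGraph_subset_localGraphT {v' : Fin n → ℤ}
    (hv' : ∀ k, AdmissibleAt a b x v k → v' k = v k) :
    boxGraph a b F x v ⊆ localGraphT F x v' :=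
  fun ⟨_, _, _⟩ ⟨he, hj, hi⟩ => (mem_localGraphT_congr (hv' _ hj) (hv' _ hi)).2 he

lemma exists_inX'_eq_of_admissibleAt (hab : ∀ i, a i < b i) (hx : x ∈ StateSpace a b)
    (v : Fin n → ℤ) : ∃ v', InX' a b x v' ∧ ∀ k, AdmissibleAt a b x v k → v' k = v k := by
  classical
  refine ⟨fun k => if AdmissibleAt a b x v k then v k else if x k < b k then 1 else -1,
    ⟨hx, fun k => ?_, fun k => ?_⟩, fun k hk => if_pos hk⟩
  · dsimp only
    split_ifs with h
    exacts [h.2.1, Or.inl rfl, Or.inr rfl]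
  · have := hx k
    have := hab k
    change a k ≤ x k + _ ∧ x k + _ ≤ b k
    dsimp only
    split_ifs with h
    exacts [h.2.2, by omega, by omega]

lemma isPFVS_boxGraph (hab : ∀ i, a i < b i) {I : Finset (Fin n)}
    (hI : ∀ x v, InX' a b x v → IsPFVS (localGraphT F x v) I) (x v : Fin n → ℤ) :
    IsPFVS (boxGraph a b F x v) I := by
  intro c hc
  obtain ⟨e, he⟩ := List.exists_mem_of_ne_nil c hc.1.1
  obtain ⟨v', hv', hvv'⟩ := exists_inX'_eq_of_admissibleAt hab (hc.1.2.1 e he).2.1.1 v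
  exact hI x v' hv' c (IsPosCircuit.mono (boxGraph_subset_localGraphT hvv') hc)

lemma boxThresholds_eq_Tset (hab : ∀ i, a i < b i) (i : Fin n) :
    boxThresholds a b F i = Tset a b F i := by
  ext t
  constructor
  · rintro ⟨x, v, rfl, hmem⟩
    have hadm := admissibleAt_of_memPosCircuit hmem
    obtain ⟨v', hv', hvv'⟩ := exists_inX'_eq_of_admissibleAt hab hadm.1 v
    exact ⟨x, v', hv', by rw [hvv' i hadm],
      MemPosCircuit.mono (boxGraph_subset_localGraphT hvv') hmem⟩
  · rintro ⟨x, v, hv, rfl, hmem⟩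
    exact ⟨x, v, rfl, boxGraph_eq_localGraphT hv ▸ hmem⟩

end LocalGraph

end BoxDynamics

theorem stmt4_general {n : ℕ} (a b : Fin n → ℤ) (hab : ∀ i, a i + 1 ≤ b i)
    (F : (Fin n → ℤ) → Fin n → ℤ)
    (I : Finset (Fin n))
    (hI : ∀ x v, InX' a b x v → IsPFVS (localGraphT F x v) I) :
    {A | IsAttractor a b F A}.ncard ≤ ∏ i ∈ I, ((Tset a b F i).ncard + 1) := by
  have hlt : ∀ i, a i < b i := hab
  simp_rw [← BoxDynamics.boxThresholds_eq_Tset hlt]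
  exact BoxDynamics.ncard_setOf_isAttractor_le_prod (BoxDynamics.isPFVS_boxGraph hlt hI)

/-- Main result: if `I` is a positive feedback vertex set of every
`G_F(x,v)`, then the number of attractors of `Γ(F)` is at most
`∏_{i ∈ I} (|T_i(G_F)| + 1)`. -/
theorem stmt4 {n : ℕ} (a b : Fin n → ℤ) (hab : ∀ i, a i + 1 ≤ b i)
    (F : (Fin n → ℤ) → Fin n → ℤ)
    (hF : ∀ x ∈ StateSpace a b, F x ∈ StateSpace a b)
    (I : Finset (Fin n))
    (hI : ∀ x v, InX' a b x v → IsPFVS (localGraphT F x v) I) :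
    {A | IsAttractor a b F A}.ncard ≤ ∏ i ∈ I, ((Tset a b F i).ncard + 1) :=
  stmt4_general a b hab F I hI
end

section
/- Let X = ∏_{i=1}^n X_i be a product of n finite intervals of integers, each of cardinality at least 2, let F = (f_1,…,f_n) be a map from X to itself, and let Y be a subinterval of X_1. Define F̃ = (f̃_1,…,f̃_n) : X → X by f̃_i = f_i for i > 1 and f̃_1(x) = min(Y) if f_1(x) < min(Y), f̃_1(x) = f_1(x) if f_1(x) ∈ Y, and f̃_1(x) = max(Y) if f_1(x) > max(Y). Then for every (x,v) ∈ X', the local interaction graph with thresholds G_{F̃}(x,v) is a subgraph of G_F(x,v); consequently T_i(G_{F̃}) ⊆ T_i(G_F) for every i ∈ {1,…,n}. -/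
/-- The map `F̃` obtained from `F` by clamping the first component into
the subinterval `Y = [c, d]` of `X_1`. -/
def clampFirst {n : ℕ} (i0 : Fin n) (c d : ℤ) (F : (Fin n → ℤ) → Fin n → ℤ) :
    (Fin n → ℤ) → Fin n → ℤ :=
  fun x i => if i = i0 then
      (if F x i0 < c then c else if d < F x i0 then d else F x i0)
    else F x i

/-! Clamping into `[c, d]` is monotone and only moves a value towards `[c, d]`, so whenever
the clamped values `f̃₁(x)` and `f̃₁(x + v_j e_j)` lie on both sides of a threshold, the
original values `f₁(x)` and `f₁(x + v_j e_j)` lie on the same sides. Both the threshold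
condition and the sign of the Jacobian entry, which is read off the order of these two
values, therefore pass from `F̃` to `F`. -/

lemma Int.sign_ediv_of_eq_one_or_eq_neg_one {A w : ℤ} (hw : w = 1 ∨ w = -1) :
    (A / w).sign = A.sign * w := by
  rcases hw with rfl | rfl <;> simp [Int.sign_neg]

lemma jac_sign {n : ℕ} (F : (Fin n → ℤ) → Fin n → ℤ) {x v : Fin n → ℤ} (hv : IsDir v)
    (i j : Fin n) :
    (jac F x v i j).sign = (F (Function.update x j (x j + v j)) i - F x i).sign * v j :=
  Int.sign_ediv_of_eq_one_or_eq_neg_one (hv j)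

lemma mem_localGraph_of_jac_sign_eq {n : ℕ} {F G : (Fin n → ℤ) → Fin n → ℤ}
    {x v : Fin n → ℤ} {e : SEdge n}
    (h : (jac G x v e.2.2 e.1).sign = (jac F x v e.2.2 e.1).sign)
    (he : e ∈ localGraph G x v) : e ∈ localGraph F x v := by
  simpa only [localGraph, Set.mem_ofPred_eq, ← Int.sign_eq_one_iff_pos,
    ← Int.sign_eq_neg_one_iff_neg, h] using he

lemma BothSides.of_crossing {p q p' q' : ℤ} {t : ℚ}
    (hpq : (p : ℚ) < t → t < q → (p' : ℚ) < t ∧ t < q')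
    (hqp : (q : ℚ) < t → t < p → (q' : ℚ) < t ∧ t < p')
    (h : BothSides p q t) : BothSides p' q' t ∧ (q - p).sign = (q' - p').sign := by
  rcases h with ⟨hp, hq⟩ | ⟨hq, hp⟩
  · obtain ⟨hp', hq'⟩ := hpq hp hq
    have hlt : p < q := by exact_mod_cast hp.trans hq
    have hlt' : p' < q' := by exact_mod_cast hp'.trans hq'
    rw [Int.sign_eq_one_of_pos (sub_pos.2 hlt), Int.sign_eq_one_of_pos (sub_pos.2 hlt')]
    exact ⟨Or.inl ⟨hp', hq'⟩, rfl⟩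
  · obtain ⟨hq', hp'⟩ := hqp hq hp
    have hlt : q < p := by exact_mod_cast hq.trans hp
    have hlt' : q' < p' := by exact_mod_cast hq'.trans hp'
    rw [Int.sign_eq_neg_one_of_neg (sub_neg.2 hlt), Int.sign_eq_neg_one_of_neg (sub_neg.2 hlt')]
    exact ⟨Or.inr ⟨hq', hp'⟩, rfl⟩

lemma localGraphT_subset_of_crossing {n : ℕ} {F G : (Fin n → ℤ) → Fin n → ℤ}
    (hcross : ∀ y y' i (t : ℚ), (G y i : ℚ) < t → t < G y' i → (F y i : ℚ) < t ∧ t < F y' i)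
    {x v : Fin n → ℤ} (hv : IsDir v) : localGraphT G x v ⊆ localGraphT F x v := by
  rintro ⟨j, s, i⟩ ⟨hloc, hbs⟩
  obtain ⟨hbs', hsign⟩ := BothSides.of_crossing (hcross _ _ _ _) (hcross _ _ _ _) hbs
  refine ⟨mem_localGraph_of_jac_sign_eq ?_ hloc, hbs'⟩
  rw [jac_sign G hv, jac_sign F hv, hsign]

lemma lt_and_lt_of_clamp_lt_lt {c d p q : ℤ} {t : ℚ} (hcd : c ≤ d)
    (hp : ((if p < c then c else if d < p then d else p : ℤ) : ℚ) < t)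
    (hq : t < ((if q < c then c else if d < q then d else q : ℤ) : ℚ)) :
    (p : ℚ) < t ∧ t < q := by
  have hcd' : (c : ℚ) ≤ d := by exact_mod_cast hcd
  split_ifs at hp hq <;> qify at * <;> constructor <;> linarith

lemma clampFirst_crossing {n : ℕ} (i0 : Fin n) {c d : ℤ} (hcd : c ≤ d)
    (F : (Fin n → ℤ) → Fin n → ℤ) (y y' : Fin n → ℤ) (i : Fin n) (t : ℚ)
    (hy : (clampFirst i0 c d F y i : ℚ) < t) (hy' : t < clampFirst i0 c d F y' i) :
    (F y i : ℚ) < t ∧ t < F y' i := by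
  rcases eq_or_ne i i0 with rfl | hi
  · simp only [clampFirst] at hy hy'
    exact lt_and_lt_of_clamp_lt_lt hcd hy hy'
  · simp only [clampFirst, if_neg hi] at hy hy'
    exact ⟨hy, hy'⟩

lemma IsCircuit.mono {n : ℕ} {E E' : Set (SEdge n)} (h : E ⊆ E') {c : List (SEdge n)} :
    IsCircuit E c → IsCircuit E' c
  | ⟨hne, hE, hcons, hclose, hnodup⟩ => ⟨hne, fun e he => h (hE e he), hcons, hclose, hnodup⟩

lemma MemPosCircuit.mono {n : ℕ} {E E' : Set (SEdge n)} (h : E ⊆ E') {i : Fin n} :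
    MemPosCircuit E i → MemPosCircuit E' i
  | ⟨c, ⟨hc, hpos⟩, hi⟩ => ⟨c, ⟨hc.mono h, hpos⟩, hi⟩

lemma Tset_mono {n : ℕ} {a b : Fin n → ℤ} {F G : (Fin n → ℤ) → Fin n → ℤ}
    (h : ∀ x v, InX' a b x v → localGraphT G x v ⊆ localGraphT F x v) (i : Fin n) :
    Tset a b G i ⊆ Tset a b F i
  | _, ⟨x, v, hxv, ht, hmem⟩ => ⟨x, v, hxv, ht, hmem.mono (h x v hxv)⟩

theorem stmt14_general {n : ℕ} (hn : 0 < n) (a b : Fin n → ℤ)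
    (F : (Fin n → ℤ) → Fin n → ℤ)
    (c d : ℤ) (hcd : c ≤ d) :
    (∀ x v, InX' a b x v →
      localGraphT (clampFirst ⟨0, hn⟩ c d F) x v ⊆ localGraphT F x v) ∧
    ∀ i : Fin n, Tset a b (clampFirst ⟨0, hn⟩ c d F) i ⊆ Tset a b F i := by
  have hsub : ∀ x v, InX' a b x v →
      localGraphT (clampFirst ⟨0, hn⟩ c d F) x v ⊆ localGraphT F x v :=
    fun _ _ hxv => localGraphT_subset_of_crossing (clampFirst_crossing _ hcd F) hxv.2.1
  exact ⟨hsub, Tset_mono hsub⟩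

/-- `G_{F̃}(x,v)` is a subgraph of `G_F(x,v)`, and consequently
`T_i(G_{F̃}) ⊆ T_i(G_F)` for every `i`. -/
theorem stmt14 {n : ℕ} (hn : 0 < n) (a b : Fin n → ℤ) (hab : ∀ i, a i + 1 ≤ b i)
    (F : (Fin n → ℤ) → Fin n → ℤ)
    (hF : ∀ x ∈ StateSpace a b, F x ∈ StateSpace a b)
    (c d : ℤ) (hc : a ⟨0, hn⟩ ≤ c) (hcd : c ≤ d) (hd : d ≤ b ⟨0, hn⟩) :
    (∀ x v, InX' a b x v →
      localGraphT (clampFirst ⟨0, hn⟩ c d F) x v ⊆ localGraphT F x v) ∧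
    ∀ i : Fin n, Tset a b (clampFirst ⟨0, hn⟩ c d F) i ⊆ Tset a b F i :=
  stmt14_general hn a b F c d hcd
end
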